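/- arXiv:1503.01165 — 4 statements merged into one kernel-verified Lean document; each statement's English description precedes it below -/
import Mathlib

section
/- For all integers k and n with n ≥ k+1 and at least one of k, n even, there exists a k-regular simple graph of order n each of whose connected components has at most 2k+1 vertices. -/
/-!
Split the vertices into blocks of sizes between `k + 1` and `2k + 1` and put a `k`-regular graph
on each block. For `n ≤ 2k + 1` one block suffices; otherwise split off a block of size `k + 1`,
which leaves `n - (k + 1) ≥ k + 1` vertices and preserves the parity condition, since `k + 1` is
even when `k` is odd. On `m > k` vertices, a `k`-regular graph is the circulant graph on `ZMod m`
with jumps `±1, …, ±(k / 2)` when `k` is even, and otherwise (then `m` is even) the complement of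
such a graph of the even degree `m - 1 - k`.
-/

open SimpleGraph

namespace SimpleGraph

variable {V W β : Type*} {G : SimpleGraph V} {H : SimpleGraph W}

theorem Reachable.apply_eq_of_adj {f : V → β} (hf : ∀ ⦃u v⦄, G.Adj u v → f u = f v) {u v : V}
    (h : G.Reachable u v) : f u = f v := by
  rw [reachable_iff_reflTransGen] at h
  induction h with
  | refl => rfl
  | tail _ hadj ih => exact ih.trans (hf hadj)

theorem sum_reachable_inl_iff {u v : V} :
    (G ⊕g H).Reachable (.inl u) (.inl v) ↔ G.Reachable u v := by
  refine ⟨fun h => ?_, fun h => h.map Embedding.sumInl.toHom⟩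
  have hf : ∀ ⦃x y⦄, (G ⊕g H).Adj x y →
      Sum.map G.connectedComponentMk H.connectedComponentMk x =
        Sum.map G.connectedComponentMk H.connectedComponentMk y := by
    rintro (x | x) (y | y) hxy <;> simp_all [ConnectedComponent.eq, Adj.reachable]
  simpa [ConnectedComponent.eq] using h.apply_eq_of_adj hf

theorem sum_reachable_inr_iff {u v : W} :
    (G ⊕g H).Reachable (.inr u) (.inr v) ↔ H.Reachable u v := by
  rw [← Iso.sumComm.reachable_iff]
  exact sum_reachable_inl_iff

theorem supp_connectedComponentMk_sum_inl (v : V) :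
    ((G ⊕g H).connectedComponentMk (.inl v)).supp =
      Sum.inl '' (G.connectedComponentMk v).supp := by
  ext (w | w) <;> simp [ConnectedComponent.eq, reachable_comm, sum_reachable_inl_iff,
    not_reachable_sum_inl_inr]

theorem supp_connectedComponentMk_sum_inr (w : W) :
    ((G ⊕g H).connectedComponentMk (.inr w)).supp =
      Sum.inr '' (H.connectedComponentMk w).supp := by
  ext (v | v) <;> simp [ConnectedComponent.eq, reachable_comm, sum_reachable_inr_iff,
    not_reachable_sum_inl_inr]

theorem ConnectedComponent.ncard_supp_sum_le {C : ℕ}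
    (hG : ∀ c : G.ConnectedComponent, c.supp.ncard ≤ C)
    (hH : ∀ c : H.ConnectedComponent, c.supp.ncard ≤ C) (c : (G ⊕g H).ConnectedComponent) :
    c.supp.ncard ≤ C := by
  induction c using ConnectedComponent.ind with
  | h x =>
    cases x with
    | inl v =>
      rw [supp_connectedComponentMk_sum_inl, Set.ncard_image_of_injective _ Sum.inl_injective]
      exact hG _
    | inr w =>
      rw [supp_connectedComponentMk_sum_inr, Set.ncard_image_of_injective _ Sum.inr_injective]
      exact hH _

theorem ConnectedComponent.ncard_supp_le_map [Finite W] (φ : G ↪g H) (c : G.ConnectedComponent) :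
    c.supp.ncard ≤ (c.map φ.toHom).supp.ncard := by
  induction c using ConnectedComponent.ind with
  | h v =>
    refine Set.ncard_le_ncard_of_injOn φ (fun u hu => ?_) φ.injective.injOn (Set.toFinite _)
    simp_all only [ConnectedComponent.mem_supp_iff, ConnectedComponent.map_mk,
      ConnectedComponent.eq]
    exact hu.map φ.toHom

theorem IsRegularOfDegree.sum [G.LocallyFinite] [H.LocallyFinite] [(G ⊕g H).LocallyFinite]
    {k : ℕ} (hG : G.IsRegularOfDegree k) (hH : H.IsRegularOfDegree k) :
    (G ⊕g H).IsRegularOfDegree k := by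
  rintro (v | w)
  · have : (G ⊕g H).neighborFinset (.inl v) = (G.neighborFinset v).map .inl := by
      ext (u | u) <;> simp
    rw [← card_neighborFinset_eq_degree, this, Finset.card_map, card_neighborFinset_eq_degree,
      hG v]
  · have : (G ⊕g H).neighborFinset (.inr w) = (H.neighborFinset w).map .inr := by
      ext (u | u) <;> simp
    rw [← card_neighborFinset_eq_degree, this, Finset.card_map, card_neighborFinset_eq_degree,
      hH w]

theorem IsRegularOfDegree.of_iso [G.LocallyFinite] [H.LocallyFinite] {k : ℕ} (φ : G ≃g H)
    (hG : G.IsRegularOfDegree k) : H.IsRegularOfDegree k := fun w => by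
  rw [← φ.apply_symm_apply w, φ.degree_eq, hG]

theorem circulantGraph_isRegularOfDegree {A : Type*} [AddGroup A] [Fintype A] [DecidableEq A]
    (s : Finset A) (hs0 : 0 ∉ s) (hs : ∀ x ∈ s, -x ∈ s) :
    (circulantGraph (s : Set A)).IsRegularOfDegree s.card := fun v => by
  have : (circulantGraph (s : Set A)).neighborFinset v = s.map (addRightEmbedding v) := by
    ext w
    have hsub : v - w ∈ s ↔ w - v ∈ s :=
      ⟨fun h => neg_sub v w ▸ hs _ h, fun h => neg_sub w v ▸ hs _ h⟩
    have hne : w - v ∈ s → v ≠ w := by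
      rintro h rfl
      exact hs0 (sub_self v ▸ h)
    simp only [mem_neighborFinset, circulantGraph_adj, Finset.mem_coe, Finset.mem_map,
      addRightEmbedding_apply, hsub, or_self, and_iff_right_of_imp hne]
    exact ⟨fun h => ⟨_, h, sub_add_cancel w v⟩, by rintro ⟨a, ha, rfl⟩; rwa [add_sub_cancel_right]⟩
  rw [← card_neighborFinset_eq_degree, this, Finset.card_map]

end SimpleGraph

open SimpleGraph

theorem ZMod.injOn_intCast_Icc {m : ℕ} {a : ℤ} (h : 2 * a < m) :
    Set.InjOn (Int.cast : ℤ → ZMod m) (Set.Icc (-a) a) := by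
  intro i hi j hj hij
  have hdvd := (ZMod.intCast_eq_intCast_iff_dvd_sub i j m).1 hij
  have := Int.eq_zero_of_abs_lt_dvd hdvd (abs_lt.2 ⟨by grind, by grind⟩)
  omega

theorem ZMod.exists_finset_neg_mem_card (m a : ℕ) (h : 2 * a < m) :
    ∃ s : Finset (ZMod m), 0 ∉ s ∧ (∀ x ∈ s, -x ∈ s) ∧ s.card = 2 * a := by
  set t := (Finset.Icc (-a : ℤ) a).image (Int.cast : ℤ → ZMod m)
  have ht : t.card = 2 * a + 1 := by
    rw [Finset.card_image_of_injOn (by simpa using ZMod.injOn_intCast_Icc (a := a) (by omega)),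
      Int.card_Icc]
    omega
  refine ⟨t.erase 0, Finset.notMem_erase 0 t, fun x hx => ?_, ?_⟩
  · obtain ⟨hx0, hxt⟩ := Finset.mem_erase.1 hx
    obtain ⟨i, hi, rfl⟩ := Finset.mem_image.1 hxt
    refine Finset.mem_erase.2 ⟨neg_ne_zero.2 hx0, Finset.mem_image.2 ⟨-i, ?_, by push_cast; rfl⟩⟩
    simp only [Finset.mem_Icc] at hi ⊢
    omega
  · rw [Finset.card_erase_of_mem (Finset.mem_image.2 ⟨0, by simp, Int.cast_zero⟩), ht]
    rfl

namespace SimpleGraph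

variable (V : Type*) [Fintype V]

theorem exists_isRegularOfDegree_of_even {k : ℕ} (hk : k < Fintype.card V) (he : Even k) :
    ∃ (G : SimpleGraph V) (_ : DecidableRel G.Adj), G.IsRegularOfDegree k := by
  set m := Fintype.card V
  have : NeZero m := ⟨by omega⟩
  obtain ⟨a, rfl⟩ := he
  obtain ⟨s, hs0, hs, hcard⟩ := ZMod.exists_finset_neg_mem_card m a (by omega)
  have hreg := circulantGraph_isRegularOfDegree s hs0 hs
  rw [hcard, two_mul] at hreg
  let e : V ≃ ZMod m := Fintype.equivOfCardEq (ZMod.card m).symm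
  exact ⟨_, inferInstance, hreg.of_iso (Iso.comap e _).symm⟩

theorem exists_isRegularOfDegree {k : ℕ} (hk : k < Fintype.card V)
    (hpar : Even k ∨ Even (Fintype.card V)) :
    ∃ (G : SimpleGraph V) (_ : DecidableRel G.Adj), G.IsRegularOfDegree k := by
  classical
  by_cases he : Even k
  · exact exists_isRegularOfDegree_of_even V hk he
  have hcompl : Even (Fintype.card V - 1 - k) := by
    have h := hpar.resolve_left he
    simp only [Nat.even_iff] at h he ⊢
    omega
  obtain ⟨G, _, hG⟩ := exists_isRegularOfDegree_of_even V (by omega) hcompl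
  refine ⟨Gᶜ, inferInstance, ?_⟩
  convert hG.compl using 1
  omega

end SimpleGraph

def HasRegularGraphWithSmallComponents (V : Type*) [Fintype V] (k C : ℕ) : Prop :=
  ∃ (G : SimpleGraph V) (_ : DecidableRel G.Adj),
    G.IsRegularOfDegree k ∧ ∀ c : G.ConnectedComponent, c.supp.ncard ≤ C

namespace HasRegularGraphWithSmallComponents

variable {V W : Type*} [Fintype V] [Fintype W] {k C : ℕ}

theorem of_card_le (hk : k < Fintype.card V) (hpar : Even k ∨ Even (Fintype.card V))
    (hC : Fintype.card V ≤ C) : HasRegularGraphWithSmallComponents V k C := by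
  obtain ⟨G, _, hG⟩ := exists_isRegularOfDegree V hk hpar
  refine ⟨G, inferInstance, hG, fun c => ?_⟩
  calc c.supp.ncard ≤ Nat.card V := Set.ncard_le_card _
    _ ≤ C := by rwa [Nat.card_eq_fintype_card]

theorem of_equiv (e : V ≃ W) (h : HasRegularGraphWithSmallComponents V k C) :
    HasRegularGraphWithSmallComponents W k C := by
  classical
  obtain ⟨G, _, hreg, hC⟩ := h
  let φ := Iso.map e G
  refine ⟨G.map e.toEmbedding, inferInstance, hreg.of_iso φ, fun c => ?_⟩
  calc c.supp.ncard ≤ (c.map φ.symm.toEmbedding.toHom).supp.ncard :=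
        ConnectedComponent.ncard_supp_le_map _ c
    _ ≤ C := hC _

theorem sum (hV : HasRegularGraphWithSmallComponents V k C)
    (hW : HasRegularGraphWithSmallComponents W k C) :
    HasRegularGraphWithSmallComponents (V ⊕ W) k C := by
  classical
  obtain ⟨G, _, hG, hGC⟩ := hV
  obtain ⟨H, _, hH, hHC⟩ := hW
  refine ⟨G ⊕g H, inferInstance, ?_, ConnectedComponent.ncard_supp_sum_le hGC hHC⟩
  -- the library's instance `(G ⊕g H).LocallyFinite` is not the one induced by `DecidableRel`
  convert hG.sum hH

end HasRegularGraphWithSmallComponents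

/-- For all `k, n` with `n ≥ k + 1` and `k` or `n` even, there is a `k`-regular
graph of order `n` each of whose connected components has at most `2k + 1` vertices. -/
theorem exists_regular_graph_small_components (k n : ℕ) (hn : k + 1 ≤ n)
    (hpar : Even k ∨ Even n) :
    ∃ (G : SimpleGraph (Fin n)) (_ : DecidableRel G.Adj),
      G.IsRegularOfDegree k ∧
      ∀ c : G.ConnectedComponent, c.supp.ncard ≤ 2 * k + 1 := by
  induction n using Nat.strong_induction_on with
  | _ n ih =>
    by_cases hsmall : n ≤ 2 * k + 1
    · exact HasRegularGraphWithSmallComponents.of_card_le (by simpa) (by simpa) (by simpa)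
    have hblock : HasRegularGraphWithSmallComponents (Fin (k + 1)) k (2 * k + 1) :=
      .of_card_le (by simp) (by simpa [Nat.even_add_one] using em (Even k))
        (by simp only [Fintype.card_fin]; omega)
    have hrest : HasRegularGraphWithSmallComponents (Fin (n - (k + 1))) k (2 * k + 1) := by
      refine ih _ (by omega) (by omega) ?_
      by_cases hk : Even k
      · exact .inl hk
      · have h := hpar.resolve_left hk
        simp only [Nat.even_iff] at h hk ⊢
        omega
    exact (hblock.sum hrest).of_equiv (finSumFinEquiv.trans (finCongr (by omega)))
end

section
/- Let m be even with m ≥ 6, let H be an (m/2−1)-regular graph of order N, and let G be the disjoint union of the complement of H and K_n. If the complement of G contains a wheel W_m whose hub x lies in V(H), then since x has only m/2−1 neighbors inside H (in complement(G)), at least m/2+1 of the m rim vertices lie in the K_n-part, forcing two rim vertices that are adjacent on the rim to both lie in the K_n-part; but no two vertices of the K_n-part are adjacent in complement(G), a contradiction. Hence complement(G) contains no W_m with hub in V(H). -/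
/-!
Every rim vertex is adjacent to the hub `inl v`, so a rim vertex mapped into the `H`-part is
an `H`-neighbour of `v`, and injectivity allows at most `m / 2 - 1` of them. The rim vertices
mapped into the `K n`-part are pairwise non-adjacent in the complement, so they form an
independent set of the cycle `C m` and number at most `m / 2`: together fewer than `m`.
-/

open SimpleGraph

/-- The wheel `W m`: a cycle `C m` together with a hub (`none`) adjacent to all cycle vertices. -/
def wheelGraph (m : ℕ) : SimpleGraph (Option (Fin m)) where
  Adj x y :=
    match x, y with
    | some a, some b => (cycleGraph m).Adj a b
    | some _, none => True
    | none, some _ => True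
    | none, none => False
  symm := by
    constructor
    intro x y h
    match x, y with
    | some a, some b => exact (cycleGraph m).adj_symm h
    | some _, none => trivial
    | none, some _ => trivial
  loopless := by
    constructor
    intro x h
    match x with
    | some a => exact (cycleGraph m).irrefl h
    | none => exact h

namespace SimpleGraph

open Finset

lemma cycleGraph_adj_add_one {m : ℕ} [NeZero m] (hm : 2 ≤ m) (i : Fin m) :
    (cycleGraph m).Adj i (i + 1) := by
  obtain ⟨k, rfl⟩ := Nat.exists_eq_add_of_le' hm
  simp [cycleGraph_adj]

lemma two_mul_card_le_of_isIndepSet_cycleGraph {m : ℕ} (hm : 2 ≤ m) {s : Finset (Fin m)}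
    (hs : (cycleGraph m).IsIndepSet s) : 2 * #s ≤ m := by
  have : NeZero m := ⟨by omega⟩
  have hshift : #s ≤ #sᶜ := by
    refine card_le_card_of_injOn (· + 1) (fun i hi => ?_) (add_left_injective 1).injOn
    rw [coe_compl, Set.mem_compl_iff]
    have hadj := cycleGraph_adj_add_one hm i
    exact fun hi' => hs hi hi' hadj.ne hadj
  have := card_add_card_compl s
  simp only [Fintype.card_fin] at this
  omega

variable {V W : Type*} {m : ℕ}

lemma not_compl_sum_top_adj_inr (G : SimpleGraph V) (a b : W) :
    ¬(G ⊕g ⊤)ᶜ.Adj (.inr a) (.inr b) := by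
  simp

lemma compl_sum_compl_adj_inl (H : SimpleGraph V) (K : SimpleGraph W) (v w : V) :
    (Hᶜ ⊕g K)ᶜ.Adj (.inl v) (.inl w) ↔ H.Adj v w := by
  simp only [compl_adj, sum_adj_inl, Sum.inl.injEq, ne_eq, not_and, not_not]
  exact ⟨fun h => h.2 h.1, fun h => ⟨h.ne, fun _ => h⟩⟩

lemma isIndepSet_rim_isRight (G : SimpleGraph V)
    (f : wheelGraph m →g (G ⊕g (⊤ : SimpleGraph W))ᶜ) :
    (cycleGraph m).IsIndepSet ({i | (f (some i)).isRight} : Finset (Fin m)) := by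
  intro i hi j hj _ hij
  obtain ⟨a, ha⟩ := Sum.isRight_iff.mp (mem_filter.mp hi).2
  obtain ⟨b, hb⟩ := Sum.isRight_iff.mp (mem_filter.mp hj).2
  have := f.map_adj (show (wheelGraph m).Adj (some i) (some j) from hij)
  rw [ha, hb] at this
  exact not_compl_sum_top_adj_inr G a b this

lemma card_rim_not_isRight_le_degree (H : SimpleGraph V) [Fintype V] [DecidableRel H.Adj]
    (K : SimpleGraph W) (f : wheelGraph m →g (Hᶜ ⊕g K)ᶜ) (hf : Function.Injective f) {v : V}
    (hv : f none = .inl v) :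
    #{i | ¬(f (some i)).isRight} ≤ H.degree v := calc
  _ ≤ #((H.neighborFinset v).map .inl) := by
    refine card_le_card_of_injOn (fun i => f (some i)) (fun i hi => ?_)
      (hf.comp (Option.some_injective _)).injOn
    obtain ⟨w, hw⟩ := Sum.isLeft_iff.mp (Sum.not_isRight.mp (mem_filter.mp hi).2)
    have := f.map_adj (show (wheelGraph m).Adj none (some i) from trivial)
    rw [hv, hw, compl_sum_compl_adj_inl] at this
    simpa [hw] using this
  _ = H.degree v := by rw [card_map, card_neighborFinset_eq_degree]

end SimpleGraph

theorem wheel_hub_not_in_H_part_general {V : Type*} [Fintype V] (n m : ℕ)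
    (hm6 : 6 ≤ m)
    (H : SimpleGraph V) [DecidableRel H.Adj] (hreg : H.IsRegularOfDegree (m / 2 - 1)) :
    ∀ f : wheelGraph m →g (SimpleGraph.sum Hᶜ (⊤ : SimpleGraph (Fin n)))ᶜ,
      Function.Injective f → ∀ v : V, f none ≠ Sum.inl v := by
  intro f hf v hv
  have hright := two_mul_card_le_of_isIndepSet_cycleGraph (show 2 ≤ m by omega)
    (isIndepSet_rim_isRight Hᶜ f)
  have hleft := card_rim_not_isRight_le_degree H ⊤ f hf hv
  have hsplit := Finset.card_filter_add_card_filter_not (s := Finset.univ)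
    fun i : Fin m => (f (some i)).isRight
  rw [hreg v] at hleft
  rw [Finset.card_univ, Fintype.card_fin] at hsplit
  omega

/-- Let `m` be even with `m ≥ 6`, let `H` be an `(m/2 - 1)`-regular graph, and let `G` be
the disjoint union of the complement of `H` and `K n`.  Then the complement of `G`
contains no wheel `W m` whose hub lies in `V(H)`. -/
theorem wheel_hub_not_in_H_part {V : Type*} [Fintype V] (n m : ℕ) (hme : Even m)
    (hm6 : 6 ≤ m)
    (H : SimpleGraph V) [DecidableRel H.Adj] (hreg : H.IsRegularOfDegree (m / 2 - 1)) :
    ∀ f : wheelGraph m →g (SimpleGraph.sum Hᶜ (⊤ : SimpleGraph (Fin n)))ᶜ,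
      Function.Injective f → ∀ v : V, f none ≠ Sum.inl v :=
  wheel_hub_not_in_H_part_general n m hm6 H hreg
end

section
/- Let B be a bipartite graph with partition sets X and Y, 2 ≤ |X| ≤ |Y|. If every vertex x ∈ X satisfies d(x) ≥ max{|X|, |Y|/2 + 1}, then B has a cycle of length 2|X| containing all vertices of X. -/
/-!
The cycle is grown two edges at a time. Since `d(x) ≥ |Y|/2 + 1`, any two vertices of `X` have two
common neighbours, which gives a 4-cycle to start from. Let `C` be a cycle of length `2r < 2|X|`
that cannot be lengthened and `x ∈ X` a vertex off `C`. If `x` has no neighbour on `C`, common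
neighbours of `x` with two consecutive `X`-vertices of `C` splice `x` into `C`; otherwise `x` and
`C` give a path with vertex set `S = C ∪ {x}`. Call `a` and `b` partners if they are the ends of
such a path. Partners have all their common neighbours in `S` (else the path closes up into a longer
cycle), and Pósa rotations show that `b` has at most as many neighbours in `S` as `a` has partners.
Summing over a maximum clique `Q` of partners, `Q` sends at most `(r + 1)(|Q| - 1)` edges into `S`
and at most `|Y| - r` edges out of it, against `d ≥ |X| > r` and `2d ≥ |Y| + 2`. Finally, a cycle
of length `2|X|` alternates between the two sides, so it passes through all of `X`.
-/

open Finset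

namespace SimpleGraph

variable {V : Type*} {G : SimpleGraph V} {a b u v x y z : V}

namespace Walk

theorem IsPath.isCycle_cons {p : G.Walk v u} (hp : p.IsPath) (h : G.Adj u v)
    (hlen : 2 ≤ p.length) : (cons h p).IsCycle :=
  isCycle_iff_isPath_tail_and_le_length.mpr ⟨by simpa using hp, by simp only [length_cons]; omega⟩

theorem IsPath.isCycle_cons_concat {p : G.Walk a b} (hp : p.IsPath) (hab : a ≠ b)
    (hbz : G.Adj b z) (hza : G.Adj z a) (hz : z ∉ p.support) :
    (cons hza (p.concat hbz)).IsCycle := by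
  refine (hp.concat hz hbz).isCycle_cons hza ?_
  have : p.length ≠ 0 := fun h => hab (eq_of_length_eq_zero h)
  simp only [length_concat]; omega

variable [DecidableEq V]

theorem IsPath.card_toFinset_support {p : G.Walk a b} (hp : p.IsPath) :
    #p.support.toFinset = p.length + 1 := by
  rw [List.toFinset_card_of_nodup hp.support_nodup, length_support]

theorem toFinset_support_tail {c : G.Walk u u} (hc : ¬c.Nil) :
    c.support.tail.toFinset = c.support.toFinset := by
  rw [← c.cons_tail_support, List.tail_cons, List.toFinset_cons,
    insert_eq_of_mem (List.mem_toFinset.mpr (c.end_mem_tail_support hc))]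

theorem IsCycle.card_toFinset_support {c : G.Walk u u} (hc : c.IsCycle) :
    #c.support.toFinset = c.length := by
  rw [← toFinset_support_tail hc.not_nil, List.toFinset_card_of_nodup hc.support_nodup,
    List.length_tail, length_support, Nat.add_sub_cancel]

theorem IsPath.exists_rotation {p : G.Walk a b} (hp : p.IsPath) {i : ℕ} (hi : i < p.length)
    (hadj : G.Adj (p.getVert i) b) :
    ∃ q : G.Walk a (p.getVert (i + 1)), q.IsPath ∧ q.support.toFinset = p.support.toFinset := by
  -- Pósa rotation: `a ⋯ pᵢ pᵢ₊₁ ⋯ b` becomes `a ⋯ pᵢ b ⋯ pᵢ₊₁`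
  set q := (p.take i).append (cons hadj (p.drop (i + 1)).reverse)
  have hperm : q.support.Perm p.support := by
    have hsupp : q.support = p.support.take (i + 1) ++ (p.support.drop (i + 1)).reverse := by
      simp [q, support_append, support_take, support_reverse,
        Nat.min_eq_left (Nat.succ_le_of_lt hi)]
    rw [hsupp]
    exact ((List.reverse_perm _).append_left _).trans (.of_eq (List.take_append_drop _ _))
  exact ⟨q, IsPath.mk' (hperm.nodup_iff.mpr hp.support_nodup), List.toFinset_eq_of_perm _ _ hperm⟩

end Walk

section PathEnds

variable [DecidableEq V]

def pathEndsGraph (G : SimpleGraph V) (S : Finset V) : SimpleGraph V where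
  Adj a b := a ≠ b ∧ ∃ p : G.Walk a b, p.IsPath ∧ p.support.toFinset = S
  symm := ⟨fun _ _ ⟨hne, p, hp, hS⟩ =>
    ⟨hne.symm, p.reverse, hp.reverse, by rw [p.support_reverse, List.toFinset_reverse, hS]⟩⟩
  loopless := ⟨fun _ h => h.1 rfl⟩

theorem pathEndsGraph_adj {S : Finset V} :
    (G.pathEndsGraph S).Adj a b ↔ a ≠ b ∧ ∃ p : G.Walk a b, p.IsPath ∧ p.support.toFinset = S :=
  Iff.rfl

open Classical in
theorem Walk.IsPath.card_neighborFinset_inter_support_le [G.LocallyFinite] {p : G.Walk a b}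
    (hp : p.IsPath) :
    #(G.neighborFinset b ∩ p.support.toFinset) ≤
      #{c ∈ p.support.toFinset | (G.pathEndsGraph p.support.toFinset).Adj a c} := by
  set I := {i ∈ range p.length | G.Adj (p.getVert i) b}
  have hinj := hp.getVert_injOn
  calc #(G.neighborFinset b ∩ p.support.toFinset)
      ≤ #(I.image p.getVert) := by
        refine card_le_card fun y hy => ?_
        rw [mem_inter, mem_neighborFinset, List.mem_toFinset,
          Walk.mem_support_iff_exists_getVert] at hy
        obtain ⟨hby, i, rfl, hi⟩ := hy
        have hiL : i ≠ p.length := by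
          rintro rfl
          exact hby.ne p.getVert_length.symm
        exact mem_image_of_mem _ (mem_filter.mpr ⟨mem_range.mpr (by omega), hby.symm⟩)
    _ ≤ #I := card_image_le
    _ = #(I.image fun i => p.getVert (i + 1)) := by
        refine (card_image_of_injOn fun i hi j hj hij => ?_).symm
        simp only [coe_filter, mem_range, Set.mem_ofPred_eq, I] at hi hj
        have := hinj (show i + 1 ≤ p.length by omega) (show j + 1 ≤ p.length by omega) hij
        omega
    _ ≤ _ := by
        refine card_le_card fun c hc => ?_
        obtain ⟨i, hi, rfl⟩ := mem_image.mp hc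
        obtain ⟨hi, hadj⟩ := mem_filter.mp hi
        rw [mem_range] at hi
        refine mem_filter.mpr ⟨List.mem_toFinset.mpr (p.getVert_mem_support _),
          pathEndsGraph_adj.mpr ⟨fun h => ?_, hp.exists_rotation hi hadj⟩⟩
        have := hinj (show 0 ≤ p.length by omega) (show i + 1 ≤ p.length by omega)
          (p.getVert_zero.trans h)
        omega

theorem neighborFinset_inter_subset_of_pathEndsGraph_adj [G.LocallyFinite] {S : Finset V}
    (hmax : ∀ v (c : G.Walk v v), c.IsCycle → c.length ≠ #S + 1)
    (hab : (G.pathEndsGraph S).Adj a b) : G.neighborFinset a ∩ G.neighborFinset b ⊆ S := by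
  intro z hz
  by_contra hzS
  obtain ⟨hne, p, hp, hpS⟩ := hab
  rw [mem_inter, mem_neighborFinset, mem_neighborFinset] at hz
  have hzp : z ∉ p.support := by rwa [← List.mem_toFinset, hpS]
  refine hmax z _ (hp.isCycle_cons_concat hne hz.2 hz.1.symm hzp) ?_
  rw [← hpS, hp.card_toFinset_support, Walk.length_cons, Walk.length_concat]

theorem Walk.IsCycle.exists_pathEndsGraph_adj {c : G.Walk u u} (hc : c.IsCycle)
    (hy : y ∈ c.support) (hx : x ∉ c.support) (hxy : G.Adj x y) :
    ∃ w, (G.pathEndsGraph (insert x c.support.toFinset)).Adj x w := by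
  set c' := c.rotate y hy
  have hc' : c'.IsCycle := hc.rotate hy
  have hsupp : c'.tail.support.toFinset = c.support.toFinset := by
    rw [c'.support_tail_of_not_nil hc'.not_nil, ← Walk.toFinset_support_tail hc.not_nil]
    exact List.toFinset_eq_of_perm _ _ (c.support_rotate y hy).perm
  have hw : c'.snd ∈ c.support := by
    rw [← List.mem_toFinset, ← hsupp, List.mem_toFinset]
    exact c'.tail.start_mem_support
  refine ⟨c'.snd, fun h => hx (h ▸ hw), Walk.cons hxy c'.tail.reverse, ?_, ?_⟩
  · refine (Walk.cons_isPath_iff _ _).mpr ⟨hc'.isPath_tail.reverse, fun h => hx ?_⟩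
    rwa [Walk.support_reverse, List.mem_reverse, ← List.mem_toFinset, hsupp,
      List.mem_toFinset] at h
  · rw [Walk.support_cons, List.toFinset_cons, Walk.support_reverse, List.toFinset_reverse, hsupp]

end PathEnds

section Clique

variable {α : Type*} [DecidableEq α] (H : SimpleGraph α) [DecidableRel H.Adj]

theorem sum_card_filter_adj_le {P Q : Finset α} (hQ : ∀ c ∈ P, ∃ v ∈ Q, ¬H.Adj v c) :
    ∑ v ∈ Q, #{c ∈ P | H.Adj v c} ≤ #P * (#Q - 1) := by
  change ∑ v ∈ Q, #(P.bipartiteAbove H.Adj v) ≤ _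
  rw [sum_card_bipartiteAbove_eq_sum_card_bipartiteBelow, ← smul_eq_mul]
  refine sum_le_card_nsmul _ _ _ fun c hc => ?_
  obtain ⟨v, hv, hvc⟩ := hQ c hc
  rw [← card_erase_of_mem hv]
  exact card_le_card fun u hu => mem_erase.mpr
    ⟨fun huv => hvc (huv ▸ (mem_bipartiteBelow _).mp hu).2, ((mem_bipartiteBelow _).mp hu).1⟩

theorem exists_isClique_sum_le {P : Finset α} (f : α → ℕ)
    (hf : ∀ a ∈ P, ∀ b ∈ P, H.Adj a b → f b ≤ #{c ∈ P | H.Adj a c})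
    (hP : ∃ a ∈ P, ∃ b ∈ P, H.Adj a b) :
    ∃ Q ⊆ P, H.IsClique (Q : Set α) ∧ 2 ≤ #Q ∧ ∑ v ∈ Q, f v ≤ #P * (#Q - 1) := by
  classical
  obtain ⟨a, ha, b, hb, hab⟩ := hP
  have hpair : {a, b} ∈ P.powerset.filter fun Q : Finset α => H.IsClique (Q : Set α) := by
    simp [insert_subset_iff, ha, hb, hab, isClique_insert, hab.ne]
  obtain ⟨Q, hQ, hmax⟩ := exists_max_image _ card ⟨_, hpair⟩
  obtain ⟨hQP, hclique⟩ := mem_filter.mp hQ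
  rw [mem_powerset] at hQP
  have h2 : 2 ≤ #Q := card_pair hab.ne ▸ hmax _ hpair
  have hnot : ∀ c ∈ P, ∃ v ∈ Q, ¬H.Adj v c := by
    intro c hc
    by_contra! h
    have hcQ : c ∉ Q := fun hcQ => H.loopless.irrefl c (h c hcQ)
    have := hmax (insert c Q) (mem_filter.mpr ⟨mem_powerset.mpr (insert_subset hc hQP),
      coe_insert c Q ▸ isClique_insert.mpr ⟨hclique, fun v hv _ => (h v hv).symm⟩⟩)
    rw [card_insert_of_notMem hcQ] at this
    omega
  refine ⟨Q, hQP, hclique, h2, Nat.le_of_mul_le_mul_left ?_ (by omega : 0 < #Q - 1)⟩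
  calc (#Q - 1) * ∑ u ∈ Q, f u = ∑ v ∈ Q, ∑ u ∈ Q.erase v, f u := by
        rw [sum_comm' (t' := Q) (s' := Q.erase) (by simp only [mem_erase]; tauto), mul_sum]
        exact sum_congr rfl fun u hu => by rw [sum_const, card_erase_of_mem hu, smul_eq_mul]
    _ ≤ ∑ v ∈ Q, ∑ _u ∈ Q.erase v, #{c ∈ P | H.Adj v c} := by
        refine sum_le_sum fun v hv => sum_le_sum fun u hu => ?_
        have hu' := mem_of_mem_erase hu
        exact hf v (hQP hv) u (hQP hu') (hclique hv hu' (ne_of_mem_erase hu).symm)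
    _ = (#Q - 1) * ∑ v ∈ Q, #{c ∈ P | H.Adj v c} := by
        rw [mul_sum]
        exact sum_congr rfl fun v hv => by rw [sum_const, card_erase_of_mem hv, smul_eq_mul]
    _ ≤ (#Q - 1) * (#P * (#Q - 1)) := Nat.mul_le_mul_left _ (H.sum_card_filter_adj_le hnot)

end Clique

section Bipartite

theorem IsBipartiteWith.mem_iff_notMem_of_adj {s t : Set V} (h : G.IsBipartiteWith s t)
    (huv : G.Adj u v) : u ∈ s ↔ v ∉ s := by
  rcases h.mem_of_adj huv with ⟨hu, hv⟩ | ⟨hu, hv⟩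
  · exact iff_of_true hu (Set.disjoint_right.mp h.disjoint hv)
  · exact iff_of_false (Set.disjoint_right.mp h.disjoint hu) (not_not.mpr hv)

variable [DecidableEq V] {s t : Finset V}

theorem IsBipartiteWith.two_mul_countP_support (h : G.IsBipartiteWith s t) (p : G.Walk u v) :
    2 * p.support.countP (· ∈ s) =
      p.length + (if u ∈ s then 1 else 0) + (if v ∈ s then 1 else 0) := by
  induction p with
  | nil => simp only [Walk.support_nil, List.countP_singleton]; split_ifs <;> simp_all
  | @cons u w v huw p ih =>
    have hcross : u ∈ s ↔ w ∉ s := h.mem_iff_notMem_of_adj huw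
    simp only [Walk.support_cons, List.countP_cons, Walk.length_cons] at ih ⊢
    by_cases hu : u ∈ s <;> by_cases hw : w ∈ s <;>
      simp only [hu, hw, if_true, if_false, decide_true, decide_false, not_true, not_false_iff,
        iff_true, iff_false, Bool.false_eq_true] at ih hcross ⊢ <;>
      omega

theorem IsBipartiteWith.mem_of_even_length (h : G.IsBipartiteWith s t) (p : G.Walk u v)
    (hu : u ∈ s) (hp : Even p.length) : v ∈ s := by
  have := h.two_mul_countP_support p
  by_contra hv
  simp only [hu, hv, if_true, if_false] at this
  obtain ⟨k, hk⟩ := hp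
  omega

theorem IsBipartiteWith.two_mul_card_filter_support (h : G.IsBipartiteWith s t)
    {c : G.Walk u u} (hc : c.IsCycle) : 2 * #{w ∈ c.support.toFinset | w ∈ s} = c.length := by
  have hcount := h.two_mul_countP_support c
  rw [← c.cons_tail_support, List.countP_cons] at hcount
  have htail : {w ∈ c.support.toFinset | w ∈ s} = (c.support.tail.filter (· ∈ s)).toFinset := by
    rw [← Walk.toFinset_support_tail hc.not_nil]
    ext w
    simp
  rw [htail, List.toFinset_card_of_nodup (hc.support_nodup.filter _),
    ← List.countP_eq_length_filter]
  by_cases hu : u ∈ s <;>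
    simp only [hu, decide_true, decide_false, if_true, if_false, Bool.false_eq_true] at hcount <;>
    omega

theorem IsBipartiteWith.subset_toFinset_support (h : G.IsBipartiteWith s t) {c : G.Walk u u}
    (hc : c.IsCycle) (hlen : c.length = 2 * #s) : s ⊆ c.support.toFinset := by
  have hcard := h.two_mul_card_filter_support hc
  have hfilter : {w ∈ c.support.toFinset | w ∈ s} = s :=
    eq_of_subset_of_card_le (fun w hw => (mem_filter.mp hw).2) (by omega)
  exact hfilter ▸ filter_subset _ _

theorem IsBipartiteWith.mem_of_pathEndsGraph_adj (hB : G.IsBipartiteWith s t) {S : Finset V}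
    (hS : Odd #S) (hab : (G.pathEndsGraph S).Adj a b) (ha : a ∈ s) : b ∈ s := by
  obtain ⟨-, p, hp, hpS⟩ := hab
  obtain ⟨k, hk⟩ := hS
  refine hB.mem_of_even_length p ha ⟨k, ?_⟩
  have := hp.card_toFinset_support
  rw [hpS] at this
  omega

variable [G.LocallyFinite] {X Y : Finset V}

theorem IsBipartiteWith.two_le_card_inter_neighborFinset (hB : G.IsBipartiteWith X Y)
    (hu : u ∈ X) (hv : v ∈ X) (hdu : #Y + 2 ≤ 2 * G.degree u) (hdv : #Y + 2 ≤ 2 * G.degree v) :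
    2 ≤ #(G.neighborFinset u ∩ G.neighborFinset v) := by
  have hunion : #(G.neighborFinset u ∪ G.neighborFinset v) ≤ #Y := card_le_card <|
    union_subset (isBipartiteWith_neighborFinset_subset hB hu)
      (isBipartiteWith_neighborFinset_subset hB hv)
  have := card_union_add_card_inter (G.neighborFinset u) (G.neighborFinset v)
  rw [← card_neighborFinset_eq_degree] at hdu hdv
  omega

theorem IsBipartiteWith.exists_isCycle_length_four (hB : G.IsBipartiteWith X Y)
    (hdeg : ∀ x ∈ X, #Y + 2 ≤ 2 * G.degree x) (hX : 2 ≤ #X) :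
    ∃ (u : V) (c : G.Walk u u), c.IsCycle ∧ c.length = 4 := by
  obtain ⟨x₁, hx₁, x₂, hx₂, hne⟩ := one_lt_card.mp hX
  obtain ⟨w, hw, w', hw', hww'⟩ := one_lt_card.mp
    (hB.two_le_card_inter_neighborFinset hx₁ hx₂ (hdeg _ hx₁) (hdeg _ hx₂))
  simp only [mem_inter, mem_neighborFinset] at hw hw'
  refine ⟨x₁, .cons hw.1 (.cons hw.2.symm (.cons hw'.2 (.cons hw'.1.symm .nil))), ?_, rfl⟩
  refine Walk.IsPath.isCycle_cons ?_ _ (by simp)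
  simp [Walk.cons_isPath_iff, hw.1.ne', hw.2.ne', hw'.1.ne', hw'.2.ne, hww', hne.symm]

theorem IsBipartiteWith.exists_adj_mem_support (hB : G.IsBipartiteWith X Y)
    (hdeg : ∀ x ∈ X, #Y + 2 ≤ 2 * G.degree x) {c : G.Walk u u} (hc : c.IsCycle)
    (hmax : ∀ v (c' : G.Walk v v), c'.IsCycle → c'.length ≠ c.length + 2)
    (hx : x ∈ X) (hxc : x ∉ c.support) : ∃ y ∈ c.support, G.Adj x y := by
  by_contra! hN
  obtain ⟨x₀, hx₀⟩ : ∃ x₀, x₀ ∈ {w ∈ c.support.toFinset | w ∈ X} := card_pos.mp <| by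
    have := hB.two_mul_card_filter_support hc
    have := hc.three_le_length
    omega
  rw [mem_filter, List.mem_toFinset] at hx₀
  obtain ⟨c', hc', hlen, hsupp⟩ : ∃ c' : G.Walk x₀ x₀,
      c'.IsCycle ∧ c'.length = c.length ∧ ∀ w ∈ c'.support, w ∈ c.support :=
    ⟨c.rotate x₀ hx₀.1, hc.rotate hx₀.1, c.length_rotate _ _,
      fun w => (c.mem_support_rotate_iff _ _).mp⟩
  rcases c' with _ | ⟨h₀, _ | ⟨h₁, t⟩⟩
  · exact Walk.not_isCycle_nil hc'
  · simpa using hc'.three_le_length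
  -- the cycle runs `x₀ - y - x₁ - t - x₀`; replacing `y` by `z - x - z'` lengthens it by two
  have hx₁ : _ ∈ X := hB.mem_of_mem_adj' (hB.mem_of_mem_adj hx₀.2 h₀) h₁.symm
  obtain ⟨z, hz⟩ := (card_pos (s := G.neighborFinset x ∩ G.neighborFinset x₀)).mp <| by
    have := hB.two_le_card_inter_neighborFinset hx hx₀.2 (hdeg _ hx) (hdeg _ hx₀.2)
    omega
  obtain ⟨z', hz', hzz'⟩ := exists_mem_ne
    (hB.two_le_card_inter_neighborFinset hx hx₁ (hdeg _ hx) (hdeg _ hx₁)) z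
  simp only [mem_inter, mem_neighborFinset] at hz hz'
  have ht : t.IsPath := ((Walk.cons_isPath_iff _ _).mp ((Walk.cons_isCycle_iff _ _).mp hc').1).1
  have hout : ∀ w, G.Adj x w → w ∉ t.support := fun w hxw hw => hN w (hsupp w (by simp [hw])) hxw
  have hxt : x ∉ t.support := fun hxt => hxc (hsupp x (by simp [hxt]))
  have hd : (Walk.cons hz.1.symm (.cons hz'.1 (.cons hz'.2.symm t))).IsPath := by
    simp only [Walk.cons_isPath_iff, Walk.support_cons, List.mem_cons, not_or]
    exact ⟨⟨⟨ht, hout z' hz'.1⟩, hz'.1.ne, hxt⟩, hz.1.ne', hzz'.symm, hout z hz.1⟩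
  refine hmax x₀ _ (hd.isCycle_cons hz.2 (by simp)) ?_
  simp only [Walk.length_cons] at hlen ⊢
  omega

theorem IsBipartiteWith.mul_lt_sum_card_neighborFinset_inter (hB : G.IsBipartiteWith X Y)
    (hdeg : ∀ x ∈ X, #X ≤ G.degree x ∧ #Y + 2 ≤ 2 * G.degree x) {Q S : Finset V} {r : ℕ}
    (hQX : Q ⊆ X) (hQ : 2 ≤ #Q)
    (hdisj : (Q : Set V).PairwiseDisjoint fun v => G.neighborFinset v \ S)
    (hY : #(Y \ S) + r = #Y) (hr : r < #X) :
    (r + 1) * (#Q - 1) < ∑ v ∈ Q, #(G.neighborFinset v ∩ S) := by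
  have hout : ∑ v ∈ Q, #(G.neighborFinset v \ S) ≤ #(Y \ S) := by
    rw [← card_biUnion hdisj]
    exact card_le_card <| biUnion_subset.mpr fun v hv =>
      sdiff_subset_sdiff (isBipartiteWith_neighborFinset_subset hB (hQX hv)) le_rfl
  have hsplit : ∑ v ∈ Q, G.degree v =
      ∑ v ∈ Q, #(G.neighborFinset v ∩ S) + ∑ v ∈ Q, #(G.neighborFinset v \ S) := by
    rw [← sum_add_distrib]
    exact sum_congr rfl fun v _ => by rw [card_inter_add_card_sdiff, card_neighborFinset_eq_degree]
  have h₁ : #Q * #X ≤ ∑ v ∈ Q, G.degree v := by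
    simpa using card_nsmul_le_sum Q _ _ fun v hv => (hdeg v (hQX hv)).1
  have h₂ : #Q * (#Y + 2) ≤ 2 * ∑ v ∈ Q, G.degree v := by
    rw [mul_sum]
    simpa using card_nsmul_le_sum Q _ _ fun v hv => (hdeg v (hQX hv)).2
  by_contra! h
  obtain ⟨q, hq⟩ : ∃ q, #Q = q + 2 := ⟨#Q - 2, by omega⟩
  rw [hq, show q + 2 - 1 = q + 1 by omega] at h
  rw [hq] at h₁ h₂
  have hYr : 2 * r + 1 ≤ #Y := by nlinarith
  nlinarith [Nat.mul_le_mul_left q hYr]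

theorem IsBipartiteWith.exists_isCycle_of_pathEndsGraph_adj (hB : G.IsBipartiteWith X Y)
    (hdeg : ∀ x ∈ X, #X ≤ G.degree x ∧ #Y + 2 ≤ 2 * G.degree x) {S : Finset V} {r : ℕ}
    (hS : #S = 2 * r + 1) (hSX : #{w ∈ S | w ∈ X} = r + 1) (hSY : #{w ∈ S | w ∈ Y} = r)
    (hrX : r < #X) (hedge : ∃ a ∈ X, ∃ b, (G.pathEndsGraph S).Adj a b) :
    ∃ (v : V) (c : G.Walk v v), c.IsCycle ∧ c.length = #S + 1 := by
  classical
  by_contra! hmax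
  set H := G.pathEndsGraph S
  have hends : ∀ a b, H.Adj a b → a ∈ X → b ∈ X :=
    fun a b => hB.mem_of_pathEndsGraph_adj ⟨r, hS⟩
  have hmem : ∀ a b, H.Adj a b → a ∈ S := fun _ _ ⟨_, p, _, hpS⟩ =>
    hpS ▸ List.mem_toFinset.mpr p.start_mem_support
  set P := {w ∈ S | w ∈ X}
  have hf : ∀ a ∈ P, ∀ b ∈ P, H.Adj a b → #(G.neighborFinset b ∩ S) ≤ #{w ∈ P | H.Adj a w} := by
    rintro a ha b - ⟨-, p, hp, hpS⟩
    have hrot := hp.card_neighborFinset_inter_support_le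
    rw [hpS] at hrot
    refine hrot.trans (card_le_card fun w hw => ?_)
    obtain ⟨hwS, haw⟩ := mem_filter.mp hw
    exact mem_filter.mpr ⟨mem_filter.mpr ⟨hwS, hends a w haw (mem_filter.mp ha).2⟩, haw⟩
  have hedge' : ∃ a ∈ P, ∃ b ∈ P, H.Adj a b := by
    obtain ⟨a, ha, b, hab⟩ := hedge
    exact ⟨a, mem_filter.mpr ⟨hmem a b hab, ha⟩, b,
      mem_filter.mpr ⟨hmem b a hab.symm, hends a b hab ha⟩, hab⟩
  obtain ⟨Q, hQP, hQ, hQ2, hsum⟩ := H.exists_isClique_sum_le _ hf hedge'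
  have hdisj : (Q : Set V).PairwiseDisjoint fun v => G.neighborFinset v \ S := by
    refine fun a ha b hb hab => Finset.disjoint_left.mpr fun z hza hzb => (mem_sdiff.mp hza).2 ?_
    refine neighborFinset_inter_subset_of_pathEndsGraph_adj hmax (hQ ha hb hab) ?_
    exact mem_inter.mpr ⟨(mem_sdiff.mp hza).1, (mem_sdiff.mp hzb).1⟩
  have hY : #(Y \ S) + r = #Y := by
    rw [← hSY, filter_mem_eq_inter, inter_comm, card_sdiff_add_card_inter]
  have := hB.mul_lt_sum_card_neighborFinset_inter hdeg (fun v hv => (mem_filter.mp (hQP hv)).2)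
    hQ2 hdisj hY hrX
  rw [hSX] at hsum
  omega

theorem IsBipartiteWith.exists_isCycle_length_add_two (hB : G.IsBipartiteWith X Y)
    (hdeg : ∀ x ∈ X, #X ≤ G.degree x ∧ #Y + 2 ≤ 2 * G.degree x) {c : G.Walk u u}
    (hc : c.IsCycle) (hlen : c.length < 2 * #X) :
    ∃ (v : V) (c' : G.Walk v v), c'.IsCycle ∧ c'.length = c.length + 2 := by
  by_contra! hmax
  set r := #{w ∈ c.support.toFinset | w ∈ X}
  have hr : 2 * r = c.length := hB.two_mul_card_filter_support hc
  have hrY : 2 * #{w ∈ c.support.toFinset | w ∈ Y} = c.length :=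
    hB.symm.two_mul_card_filter_support hc
  obtain ⟨x, hx, hxc⟩ := exists_mem_notMem_of_card_lt_card (s := {w ∈ c.support.toFinset | w ∈ X})
    (t := X) (by omega)
  have hxc' : x ∉ c.support.toFinset := fun h => hxc (mem_filter.mpr ⟨h, hx⟩)
  have hxY : x ∉ Y := Finset.disjoint_left.mp (disjoint_coe.mp hB.disjoint) hx
  have hxS : x ∉ c.support := fun h => hxc' (List.mem_toFinset.mpr h)
  obtain ⟨y, hy, hxy⟩ := hB.exists_adj_mem_support (fun x hx => (hdeg x hx).2) hc hmax hx hxS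
  obtain ⟨w, hxw⟩ := hc.exists_pathEndsGraph_adj hy hxS hxy
  obtain ⟨v, c', hc', hlen'⟩ := hB.exists_isCycle_of_pathEndsGraph_adj hdeg (r := r)
    (by rw [card_insert_of_notMem hxc', hc.card_toFinset_support]; omega)
    (by rw [filter_insert, if_pos hx, card_insert_of_notMem (by simp [hxc'])])
    (by rw [filter_insert, if_neg hxY]; omega) (by omega) ⟨x, hx, w, hxw⟩
  exact hmax v c' hc' (by rw [hlen', card_insert_of_notMem hxc', hc.card_toFinset_support])

end Bipartite

end SimpleGraph

theorem jackson_bipartite_cycle_general {V : Type*} [Fintype V] [DecidableEq V]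
    (B : SimpleGraph V) [DecidableRel B.Adj] (X Y : Finset V)
    (hdisj : Disjoint X Y)
    (hbip : ∀ a b : V, B.Adj a b → (a ∈ X ∧ b ∈ Y) ∨ (a ∈ Y ∧ b ∈ X))
    (hX2 : 2 ≤ X.card)
    (hdeg : ∀ x ∈ X, X.card ≤ B.degree x ∧ Y.card + 2 ≤ 2 * B.degree x) :
    ∃ (v : V) (c : B.Walk v v), c.IsCycle ∧ c.length = 2 * X.card ∧
      ∀ x ∈ X, x ∈ c.support := by
  have hB : B.IsBipartiteWith X Y := ⟨disjoint_coe.mpr hdisj, hbip⟩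
  have hcycles : ∀ r, 2 ≤ r → r ≤ #X →
      ∃ (u : V) (c : B.Walk u u), c.IsCycle ∧ c.length = 2 * r := by
    intro r hr
    induction r, hr using Nat.le_induction with
    | base => exact fun _ => hB.exists_isCycle_length_four (fun x hx => (hdeg x hx).2) hX2
    | succ r _ ih =>
      intro hrX
      obtain ⟨u, c, hc, hlen⟩ := ih (by omega)
      obtain ⟨v, c', hc', hlen'⟩ := hB.exists_isCycle_length_add_two hdeg hc (by omega)
      exact ⟨v, c', hc', by omega⟩
  obtain ⟨u, c, hc, hlen⟩ := hcycles #X hX2 le_rfl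
  exact ⟨u, c, hc, hlen, fun x hx => List.mem_toFinset.mp (hB.subset_toFinset_support hc hlen hx)⟩

/-- Jackson's theorem.  Let `B` be a bipartite graph with partition sets `X` and `Y`,
`2 ≤ |X| ≤ |Y|`.  If every vertex `x ∈ X` has degree at least `max {|X|, |Y|/2 + 1}`,
then `B` has a cycle of length `2|X|` containing all vertices of `X`. -/
theorem jackson_bipartite_cycle {V : Type*} [Fintype V] [DecidableEq V]
    (B : SimpleGraph V) [DecidableRel B.Adj] (X Y : Finset V)
    (hdisj : Disjoint X Y)
    (hbip : ∀ a b : V, B.Adj a b → (a ∈ X ∧ b ∈ Y) ∨ (a ∈ Y ∧ b ∈ X))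
    (hX2 : 2 ≤ X.card) (hXY : X.card ≤ Y.card)
    (hdeg : ∀ x ∈ X, X.card ≤ B.degree x ∧ Y.card + 2 ≤ 2 * B.degree x) :
    ∃ (v : V) (c : B.Walk v v), c.IsCycle ∧ c.length = 2 * X.card ∧
      ∀ x ∈ X, x ∈ c.support :=
  jackson_bipartite_cycle_general B X Y hdisj hbip hX2 hdeg
end

section
/- Let G be a graph of order ν with δ(G) ≥ n + m/2 − θ, u a vertex of G, H = G[N(u)], I = V(G) \ ({u} ∪ N(u)), and D an induced subgraph of H with ν(D) ≤ (ν(H)+ε)/2 for ε ∈ {0,1}. If v, w ∈ V(D) satisfy d_H(v) ≤ ν(D) − 1 and d_H(w) ≤ ν(D) − 1 (i.e., all their H-neighbors lie in D), then |N_I(v) ∩ N_I(w)| ≥ 2δ(G) − ν(G) + 1 − ε. In particular, when ν(G) = 2n + m/2 − θ this bound equals m/2 + 1 − θ − ε ≥ m/2 − 1. -/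
/-!
Each of `v, w` is adjacent to `u`, and all of its neighbours inside `N(u)` lie in `D`, so it has
at most `ν(D) - 1` of them; hence `d_I(v), d_I(w) ≥ δ(G) - ν(D)`. Both `N_I(v)` and `N_I(w)` lie
in `I`, which has `ν(G) - 1 - ν(H)` vertices, so inclusion–exclusion gives
`|N_I(v) ∩ N_I(w)| ≥ 2δ(G) - 2ν(D) - ν(G) + 1 + ν(H) ≥ 2δ(G) - ν(G) + 1 - ε`.
-/

open SimpleGraph

theorem Set.ncard_inter_add_ncard_inter_le_ncard_inter_add {α : Type*} (s t r : Set α)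
    (hr : r.Finite) : (s ∩ r).ncard + (t ∩ r).ncard ≤ (s ∩ t ∩ r).ncard + r.ncard := by
  have hunion : (s ∩ r ∪ t ∩ r).ncard ≤ r.ncard :=
    Set.ncard_le_ncard (Set.union_subset Set.inter_subset_right Set.inter_subset_right) hr
  have hinter : s ∩ r ∩ (t ∩ r) = s ∩ t ∩ r := by
    rw [Set.inter_inter_inter_comm, Set.inter_self]
  have := Set.ncard_union_add_ncard_inter (s ∩ r) (t ∩ r) (hr.inter_of_right s)
    (hr.inter_of_right t)
  rw [hinter] at this
  omega

namespace SimpleGraph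

variable {V : Type*} [Fintype V] (G : SimpleGraph V) [DecidableRel G.Adj]

theorem ncard_neighborSet (x : V) : (G.neighborSet x).ncard = G.degree x := by
  rw [Set.ncard_eq_toFinset_card', Set.toFinset_card, card_neighborSet_eq_degree]

theorem ncard_compl_insert_neighborSet_add (u : V) :
    (insert u (G.neighborSet u))ᶜ.ncard + G.degree u + 1 = Fintype.card V := by
  have hsplit := Set.ncard_add_ncard_compl (insert u (G.neighborSet u))
  rw [Set.ncard_insert_of_notMem G.notMem_neighborSet_self, ncard_neighborSet,
    Nat.card_eq_fintype_card] at hsplit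
  omega

theorem degree_eq_of_adj {u x : V} (hux : G.Adj u x) :
    G.degree x = (G.neighborSet x ∩ G.neighborSet u).ncard + 1 +
      (G.neighborSet x ∩ (insert u (G.neighborSet u))ᶜ).ncard := by
  have hclosed : G.neighborSet x ∩ insert u (G.neighborSet u) =
      insert u (G.neighborSet x ∩ G.neighborSet u) := by
    rw [Set.inter_insert_of_mem ((G.mem_neighborSet x u).2 hux.symm)]
  have hsplit := Set.ncard_inter_add_ncard_sdiff_eq_ncard (G.neighborSet x)
    (insert u (G.neighborSet u))
  rw [hclosed, Set.ncard_insert_of_notMem fun h => G.notMem_neighborSet_self h.2,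
    ncard_neighborSet, Set.sdiff_eq] at hsplit
  omega

end SimpleGraph

theorem common_neighbors_in_I_general {V : Type*} [Fintype V]
    (G : SimpleGraph V) [DecidableRel G.Adj] (n m θ ε : ℕ)
    (hδ : n + m / 2 - θ ≤ G.minDegree)
    (u : V) (D : Set V) (hD : D ⊆ G.neighborSet u)
    (hDsize : 2 * D.ncard ≤ (G.neighborSet u).ncard + ε)
    (v w : V) (hv : v ∈ D) (hw : w ∈ D)
    (hvH : (G.neighborSet v ∩ G.neighborSet u).ncard ≤ D.ncard - 1)
    (hwH : (G.neighborSet w ∩ G.neighborSet u).ncard ≤ D.ncard - 1) :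
    (2 * (G.minDegree : ℤ) - Fintype.card V + 1 - ε ≤
      ((G.neighborSet v ∩ G.neighborSet w ∩ (insert u (G.neighborSet u))ᶜ).ncard : ℤ)) ∧
    (Fintype.card V = 2 * n + m / 2 - θ →
      ((m : ℤ) / 2 + 1 - θ - ε ≤
        ((G.neighborSet v ∩ G.neighborSet w ∩ (insert u (G.neighborSet u))ᶜ).ncard : ℤ))) := by
  have hDpos : 1 ≤ D.ncard := (Set.ncard_pos D.toFinite).2 ⟨v, hv⟩
  have hdegv := G.degree_eq_of_adj (hD hv)
  have hdegw := G.degree_eq_of_adj (hD hw)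
  have hδv := G.minDegree_le_degree v
  have hδw := G.minDegree_le_degree w
  have hI := G.ncard_compl_insert_neighborSet_add u
  have hcommon := Set.ncard_inter_add_ncard_inter_le_ncard_inter_add (G.neighborSet v)
    (G.neighborSet w) _ (insert u (G.neighborSet u))ᶜ.toFinite
  rw [G.ncard_neighborSet] at hDsize
  refine ⟨by omega, fun hcard => by omega⟩

/-- Let `G` have minimum degree at least `n + m/2 - θ`, let `u` be a vertex,
`H = G[N(u)]`, `I = V(G) \ ({u} ∪ N(u))`, and let `D ⊆ N(u)` with
`ν(D) ≤ (ν(H) + ε)/2`, `ε ∈ {0,1}`.  If `v, w ∈ D` have all their `H`-degrees at most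
`ν(D) - 1`, then `|N_I(v) ∩ N_I(w)| ≥ 2δ(G) - ν(G) + 1 - ε`; in particular, when
`ν(G) = 2n + m/2 - θ` this bound is at least `m/2 + 1 - θ - ε ≥ m/2 - 1`. -/
theorem common_neighbors_in_I {V : Type*} [Fintype V] [DecidableEq V] [Nonempty V]
    (G : SimpleGraph V) [DecidableRel G.Adj] (n m θ ε : ℕ) (hθ : θ ≤ 1) (hε : ε ≤ 1)
    (hme : Even m)
    (hδ : n + m / 2 - θ ≤ G.minDegree)
    (u : V) (D : Set V) (hD : D ⊆ G.neighborSet u)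
    (hDsize : 2 * D.ncard ≤ (G.neighborSet u).ncard + ε)
    (v w : V) (hv : v ∈ D) (hw : w ∈ D)
    (hvH : (G.neighborSet v ∩ G.neighborSet u).ncard ≤ D.ncard - 1)
    (hwH : (G.neighborSet w ∩ G.neighborSet u).ncard ≤ D.ncard - 1) :
    (2 * (G.minDegree : ℤ) - Fintype.card V + 1 - ε ≤
      ((G.neighborSet v ∩ G.neighborSet w ∩ (insert u (G.neighborSet u))ᶜ).ncard : ℤ)) ∧
    (Fintype.card V = 2 * n + m / 2 - θ →
      ((m : ℤ) / 2 + 1 - θ - ε ≤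
        ((G.neighborSet v ∩ G.neighborSet w ∩ (insert u (G.neighborSet u))ᶜ).ncard : ℤ))) :=
  common_neighbors_in_I_general G n m θ ε hδ u D hD hDsize v w hv hw hvH hwH
end
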